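/- Let n ≥ 0 and let P be a polynomial in the 2n+2 variables x₁,…,x_{n+1}, y₁,…,y_{n+1} over ℚ satisfying: (i) translation invariance: for all constants c, d one has P(x₁+c,…,x_{n+1}+c, y₁+d,…,y_{n+1}+d) = P(x₁,…,x_{n+1}, y₁,…,y_{n+1}); (ii) scaling invariance: for every nonzero rational λ, P(λx₁,…,λx_{n+1}, λ⁻¹y₁,…,λ⁻¹y_{n+1}) = P(x₁,…,x_{n+1}, y₁,…,y_{n+1}); (iii) symmetry under exchange of the two families: P(y₁,…,y_{n+1}, x₁,…,x_{n+1}) = P(x₁,…,x_{n+1}, y₁,…,y_{n+1}). Then P belongs to the ℚ-subalgebra generated by the elements τ_{i,j} = −(x_i−x_j)(y_i−y_j)/2 for 1 ≤ i < j ≤ n+1; that is, P is a polynomial in the τ_{i,j}. -/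

import Mathlib

/-!
Put `aᵢ = xᵢ - x₀` and `pᵢ = yᵢ - y₀`. Translation invariance gives `P(x, y) = P(a, p)`, and with
the exchange symmetry also `P(x, y) = P(p, a)`, so `2P = P(a, p) + P(p, a)`. Scaling invariance
forces every monomial of `P` to have the same degree in the `x`'s as in the `y`'s, so `2P` is a
combination of the symmetrised products `aᵘpᵛ + aᵛpᵘ` with `|u| = |v|`. These lie in the algebra
generated by the degree-one ones `aᵢpⱼ + aⱼpᵢ = tᵢ₀ + tⱼ₀ - tᵢⱼ`, where `tᵢⱼ = -2τᵢⱼ`: by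
induction on `|u|`, exchanging one index between `u` and `v` flips the sign modulo that algebra,
while a quadratic identity in the `aᵢpⱼ + aⱼpᵢ` controls the exchange of two indices at once.
-/

open MvPolynomial

theorem Multiset.prod_map_sumElim {α β M : Type*} [CommMonoid M] (f : α → M) (g : β → M)
    (w : Multiset (α ⊕ β)) :
    (w.map (Sum.elim f g)).prod =
      ((w.filterMap Sum.getLeft?).map f).prod * ((w.filterMap Sum.getRight?).map g).prod := by
  induction w using Multiset.induction_on with
  | empty => simp
  | cons x w ih =>
    rcases x with x | x <;> simp [Multiset.filterMap_cons, ih, mul_left_comm, mul_assoc]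

namespace MvPolynomial

theorem aeval_monomial_one {R S σ : Type*} [CommSemiring R] [CommSemiring S]
    [Algebra R S] (f : σ → S) (m : σ →₀ ℕ) :
    aeval f (monomial m (1 : R)) = ((Finsupp.toMultiset m).map f).prod := by
  classical
  rw [aeval_monomial, map_one, one_mul, Finset.prod_multiset_map_count,
    Finsupp.toFinset_toMultiset]
  simp only [Finsupp.count_toMultiset]
  rfl

theorem coeff_aeval_C_mul_X {R σ : Type*} [CommSemiring R] (c : σ → R) (P : MvPolynomial σ R)
    (m : σ →₀ ℕ) :
    coeff m (aeval (fun s => C (c s) * X s) P) =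
      ((Finsupp.toMultiset m).map c).prod * coeff m P := by
  classical
  induction P using MvPolynomial.induction_on' with
  | add p q hp hq => simp only [map_add, coeff_add, hp, hq, mul_add]
  | monomial m' r =>
    have hmon : aeval (fun s => C (c s) * X s) (monomial m' (1 : R)) =
        C ((Finsupp.toMultiset m').map c).prod * monomial m' 1 := by
      rw [aeval_monomial_one, Multiset.prod_map_mul, map_multiset_prod C, Multiset.map_map,
        ← aeval_monomial_one (R := R) X, aeval_X_left_apply]
      rfl
    have hr : monomial m' r = r • monomial m' (1 : R) := by rw [smul_monomial, smul_eq_mul, mul_one]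
    rw [hr, map_smul, hmon, C_mul_monomial, mul_one, coeff_smul, coeff_smul, coeff_monomial,
      coeff_monomial]
    split_ifs with h
    · rw [h, smul_eq_mul, smul_eq_mul, mul_one, mul_comm]
    · simp

theorem aeval_X_add_eq_self {R σ ι : Type*} [CommRing R] [IsDomain R] [Infinite R] (e : σ → ι)
    {P : MvPolynomial σ R} (h : ∀ c : ι → R, aeval (fun s => X s + C (c (e s))) P = P)
    (q : ι → MvPolynomial σ R) : aeval (fun s => X s + q (e s)) P = P := by
  -- with the shifts as new variables the identity holds at every point, hence as polynomials
  have generic : aeval (fun s => X (Sum.inl s) + X (Sum.inr (e s))) P = rename Sum.inl P := by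
    refine MvPolynomial.funext fun v => ?_
    have := congrArg (aeval (v ∘ Sum.inl)) (h (v ∘ Sum.inr))
    change aeval v _ = aeval v _
    simp only [comp_aeval_apply, aeval_rename, map_add, aeval_X, aeval_C, Function.comp_apply,
      Algebra.algebraMap_self, RingHom.id_apply] at this ⊢
    exact this
  have := congrArg (aeval (Sum.elim X q)) generic
  simpa only [comp_aeval_apply, aeval_rename, Sum.elim_comp_inl, aeval_X_left_apply, map_add,
    aeval_X, Sum.elim_inl, Sum.elim_inr] using this

theorem aeval_eq_self_of_translation_invariant {R α β : Type*} [CommRing R] [IsDomain R]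
    [Infinite R] {P : MvPolynomial (α ⊕ β) R}
    (htrans : ∀ c d : R,
      aeval (Sum.elim (fun i => X (Sum.inl i) + C c) (fun i => X (Sum.inr i) + C d)) P = P)
    (q r : MvPolynomial (α ⊕ β) R) :
    aeval (Sum.elim (fun i => X (Sum.inl i) + q) (fun i => X (Sum.inr i) + r)) P = P := by
  let block : α ⊕ β → Bool := Sum.elim (fun _ => false) (fun _ => true)
  have hblock : ∀ f : Bool → MvPolynomial (α ⊕ β) R, (fun s => X s + f (block s)) =
      Sum.elim (fun i => X (Sum.inl i) + f false) (fun i => X (Sum.inr i) + f true) := fun f => by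
    funext s; cases s <;> rfl
  have key := aeval_X_add_eq_self block (P := P) (fun c => (hblock (C ∘ c)).symm ▸ htrans _ _)
    fun b => bif b then r else q
  rwa [hblock fun b => bif b then r else q, cond_false, cond_true] at key

end MvPolynomial

theorem Subalgebra.mem_of_add_self_mem {K A : Type*} [Field K] [NeZero (2 : K)] [Ring A]
    [Algebra K A] {S : Subalgebra K A} {x : A} (h : x + x ∈ S) : x ∈ S := by
  rw [← two_smul K x] at h
  exact (Submodule.smul_mem_iff (Subalgebra.toSubmodule S) two_ne_zero).mp h

section SymmProd

variable {A ι : Type*} [CommRing A] (a p : ι → A)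

def symmProd (u v : Multiset ι) : A :=
  (u.map a).prod * (v.map p).prod + (v.map a).prod * (u.map p).prod

theorem symmProd_singleton (i j : ι) : symmProd a p {i} {j} = a i * p j + a j * p i := by
  simp [symmProd]

theorem symmProd_cons_add_symmProd_cons (i j : ι) (u v : Multiset ι) :
    symmProd a p (i ::ₘ u) (j ::ₘ v) + symmProd a p (j ::ₘ u) (i ::ₘ v) =
      symmProd a p {i} {j} * symmProd a p u v := by
  simp only [symmProd, Multiset.map_cons, Multiset.prod_cons, Multiset.map_singleton,
    Multiset.prod_singleton]
  ring

theorem two_mul_symmProd_cons_cons_add (i c j d : ι) (u v : Multiset ι) :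
    2 * (symmProd a p (i ::ₘ c ::ₘ u) (j ::ₘ d ::ₘ v) +
        symmProd a p (j ::ₘ d ::ₘ u) (i ::ₘ c ::ₘ v)) =
      (symmProd a p {i} {j} * symmProd a p {c} {d} + symmProd a p {i} {d} * symmProd a p {c} {j}
        - symmProd a p {i} {c} * symmProd a p {d} {j}) * symmProd a p u v := by
  simp only [symmProd, Multiset.map_cons, Multiset.prod_cons, Multiset.map_singleton,
    Multiset.prod_singleton]
  ring

variable {K : Type*} [Field K] [NeZero (2 : K)] [Algebra K A]

theorem symmProd_mem_of_card_eq {S : Subalgebra K A} (hS : ∀ i j, symmProd a p {i} {j} ∈ S)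
    {u v : Multiset ι} (huv : Multiset.card u = Multiset.card v) : symmProd a p u v ∈ S := by
  suffices ∀ k (u v : Multiset ι), Multiset.card u = k → Multiset.card v = k →
      symmProd a p u v ∈ S from this _ u v rfl huv.symm
  intro k
  induction k using Nat.twoStepInduction with
  | zero =>
    intro u v hu hv
    rw [Multiset.card_eq_zero.mp hu, Multiset.card_eq_zero.mp hv]
    simpa [symmProd] using S.add_mem S.one_mem S.one_mem
  | one =>
    intro u v hu hv
    obtain ⟨i, rfl⟩ := Multiset.card_eq_one.mp hu
    obtain ⟨j, rfl⟩ := Multiset.card_eq_one.mp hv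
    exact hS i j
  | more k ih₀ ih₁ =>
    intro u v hu hv
    obtain ⟨i, u₁, rfl, hu₁⟩ := Multiset.card_eq_succ_iff.mp hu
    obtain ⟨c, u₀, rfl, hu₀⟩ := Multiset.card_eq_succ_iff.mp hu₁
    obtain ⟨j, v₁, rfl, hv₁⟩ := Multiset.card_eq_succ_iff.mp hv
    obtain ⟨d, v₀, rfl, hv₀⟩ := Multiset.card_eq_succ_iff.mp hv₁
    have exchange : ∀ i j u v, Multiset.card u = k + 1 → Multiset.card v = k + 1 →
        symmProd a p (i ::ₘ u) (j ::ₘ v) + symmProd a p (j ::ₘ u) (i ::ₘ v) ∈ S :=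
      fun i j u v hu hv => by
        rw [symmProd_cons_add_symmProd_cons]
        exact S.mul_mem (hS i j) (ih₁ u v hu hv)
    have hij := exchange i j (c ::ₘ u₀) (d ::ₘ v₀) (by simp [hu₀]) (by simp [hv₀])
    have hcd := exchange c d (j ::ₘ u₀) (i ::ₘ v₀) (by simp [hu₀]) (by simp [hv₀])
    have hdouble : symmProd a p (i ::ₘ c ::ₘ u₀) (j ::ₘ d ::ₘ v₀) +
        symmProd a p (j ::ₘ d ::ₘ u₀) (i ::ₘ c ::ₘ v₀) ∈ S := by
      refine Subalgebra.mem_of_add_self_mem (K := K) ?_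
      rw [← two_mul, two_mul_symmProd_cons_cons_add]
      refine S.mul_mem (S.sub_mem (S.add_mem ?_ ?_) ?_) (ih₀ u₀ v₀ hu₀ hv₀) <;>
        exact S.mul_mem (hS _ _) (hS _ _)
    rw [Multiset.cons_swap c j, Multiset.cons_swap d i, Multiset.cons_swap d j,
      Multiset.cons_swap c i] at hcd
    refine Subalgebra.mem_of_add_self_mem (K := K) ?_
    convert S.sub_mem (S.add_mem hij hdouble) hcd using 1
    abel

theorem aeval_sumElim_add_aeval_sumElim_mem {S : Subalgebra K A}
    (hS : ∀ i j, symmProd a p {i} {j} ∈ S) {P : MvPolynomial (ι ⊕ ι) K}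
    (hP : ∀ m ∈ P.support, Multiset.card ((Finsupp.toMultiset m).filterMap Sum.getLeft?) =
      Multiset.card ((Finsupp.toMultiset m).filterMap Sum.getRight?)) :
    aeval (Sum.elim a p) P + aeval (Sum.elim p a) P ∈ S := by
  rw [P.as_sum, map_sum, map_sum, ← Finset.sum_add_distrib]
  refine S.sum_mem fun m hm => ?_
  have hmon : monomial m (coeff m P) = coeff m P • monomial m (1 : K) := by
    rw [smul_monomial, smul_eq_mul, mul_one]
  rw [hmon, map_smul, map_smul, ← smul_add, aeval_monomial_one, aeval_monomial_one,
    Multiset.prod_map_sumElim, Multiset.prod_map_sumElim]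
  convert S.smul_mem (symmProd_mem_of_card_eq a p hS (hP m hm)) (coeff m P) using 2
  simp only [symmProd]
  ring

end SymmProd

theorem card_filterMap_getLeft_eq_of_scale_invariant {K α β : Type*} [Field K] [CharZero K]
    {P : MvPolynomial (α ⊕ β) K}
    (hscale : ∀ l : K, l ≠ 0 →
      aeval (Sum.elim (fun i => C l * X (Sum.inl i)) (fun i => C l⁻¹ * X (Sum.inr i))) P = P)
    {m : α ⊕ β →₀ ℕ} (hm : m ∈ P.support) :
    Multiset.card ((Finsupp.toMultiset m).filterMap Sum.getLeft?) =
      Multiset.card ((Finsupp.toMultiset m).filterMap Sum.getRight?) := by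
  have h2 := congrArg (coeff m) (hscale 2 two_ne_zero)
  have hdiag : (Sum.elim (fun i => C 2 * X (Sum.inl i)) (fun i => C 2⁻¹ * X (Sum.inr i)) :
      α ⊕ β → MvPolynomial (α ⊕ β) K) =
        fun s => C (Sum.elim (fun _ => (2 : K)) (fun _ => 2⁻¹) s) * X s := by
    funext s; cases s <;> rfl
  rw [hdiag, coeff_aeval_C_mul_X, Multiset.prod_map_sumElim, Multiset.map_const',
    Multiset.map_const', Multiset.prod_replicate, Multiset.prod_replicate] at h2
  have hpow := (mul_eq_right₀ (mem_support_iff.mp hm)).mp h2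
  rw [inv_pow, mul_inv_eq_one₀ (pow_ne_zero _ two_ne_zero)] at hpow
  exact Nat.pow_right_injective le_rfl (by exact_mod_cast hpow)

def tauSet (ι : Type*) [LinearOrder ι] : Set (MvPolynomial (ι ⊕ ι) ℚ) :=
  {p | ∃ i j : ι, i < j ∧
    p = C (-(1 / 2) : ℚ) * ((X (Sum.inl i) - X (Sum.inl j)) * (X (Sum.inr i) - X (Sum.inr j)))}

theorem sub_mul_sub_mem_adjoin_tauSet {ι : Type*} [LinearOrder ι] (i j : ι) :
    (X (Sum.inl i) - X (Sum.inl j)) * (X (Sum.inr i) - X (Sum.inr j)) ∈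
      Algebra.adjoin ℚ (tauSet ι) := by
  have key : ∀ i j : ι, i < j →
      (X (Sum.inl i) - X (Sum.inl j)) * (X (Sum.inr i) - X (Sum.inr j)) ∈
        Algebra.adjoin ℚ (tauSet ι) := fun i j hij => by
    have hτ := (Algebra.adjoin ℚ (tauSet ι)).smul_mem
      (Algebra.subset_adjoin ⟨i, j, hij, rfl⟩) (-2 : ℚ)
    rwa [smul_eq_C_mul, ← mul_assoc, ← C_mul, show (-2 : ℚ) * -(1 / 2) = 1 by norm_num, C_1,
      one_mul] at hτ
  rcases lt_trichotomy i j with hij | rfl | hji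
  · exact key i j hij
  · simp
  · convert key j i hji using 1
    ring

theorem symmProd_mem_adjoin_tauSet {ι : Type*} [LinearOrder ι] (i₀ i j : ι) :
    symmProd (fun i => X (Sum.inl i) - X (Sum.inl i₀)) (fun i => X (Sum.inr i) - X (Sum.inr i₀))
      {i} {j} ∈ Algebra.adjoin ℚ (tauSet ι) := by
  rw [symmProd_singleton]
  convert sub_mem (add_mem (sub_mul_sub_mem_adjoin_tauSet i i₀)
    (sub_mul_sub_mem_adjoin_tauSet j i₀)) (sub_mul_sub_mem_adjoin_tauSet i j) using 1
  ring

theorem statement2 (n : ℕ) (P : MvPolynomial (Fin (n + 1) ⊕ Fin (n + 1)) ℚ)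
    (htrans : ∀ c d : ℚ,
      aeval (Sum.elim (fun i => X (Sum.inl i) + C c) (fun i => X (Sum.inr i) + C d)) P = P)
    (hscale : ∀ l : ℚ, l ≠ 0 →
      aeval (Sum.elim (fun i => C l * X (Sum.inl i)) (fun i => C l⁻¹ * X (Sum.inr i))) P = P)
    (hswap : rename (Sum.elim Sum.inr Sum.inl) P = P) :
    P ∈ Algebra.adjoin ℚ
      {p : MvPolynomial (Fin (n + 1) ⊕ Fin (n + 1)) ℚ | ∃ i j : Fin (n + 1), i < j ∧
        p = C (-(1 / 2) : ℚ) *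
          ((X (Sum.inl i) - X (Sum.inl j)) * (X (Sum.inr i) - X (Sum.inr j)))} := by
  change P ∈ Algebra.adjoin ℚ (tauSet (Fin (n + 1)))
  set a : Fin (n + 1) → MvPolynomial (Fin (n + 1) ⊕ Fin (n + 1)) ℚ :=
    fun i => X (Sum.inl i) - X (Sum.inl 0)
  set p : Fin (n + 1) → MvPolynomial (Fin (n + 1) ⊕ Fin (n + 1)) ℚ :=
    fun i => X (Sum.inr i) - X (Sum.inr 0)
  have hap : aeval (Sum.elim a p) P = P := by
    simpa only [← sub_eq_add_neg]
      using aeval_eq_self_of_translation_invariant htrans (-X (Sum.inl 0)) (-X (Sum.inr 0))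
  have hpa : aeval (Sum.elim p a) P = P := by
    have := congrArg (rename (Sum.elim Sum.inr Sum.inl)) hap
    rw [hswap, comp_aeval_apply] at this
    convert this using 3
    funext s; cases s <;> simp [a, p]
  have hmem := aeval_sumElim_add_aeval_sumElim_mem a p (symmProd_mem_adjoin_tauSet 0)
    fun _ hm => card_filterMap_getLeft_eq_of_scale_invariant hscale hm
  rw [hap, hpa] at hmem
  exact Subalgebra.mem_of_add_self_mem hmem
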